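/- Let R = ℂ[x₁,x₂,y₁,y₂]/(y₁x₁ − x₂ + 1, y₂x₂ − x₁ + 1). Then the localization of R at the element y₂·(1 − y₁y₂) is isomorphic as a ℂ-algebra to the Laurent polynomial ring ℂ[v₁^{±1}, v₂^{±1}], via the map x₁ ↦ −(v₂+1)·v₁^{−1}, x₂ ↦ −(v₁+v₂+1)·(v₁v₂)^{−1}, y₁ ↦ (v₁+1)·v₂^{−1}, y₂ ↦ v₂, whose inverse sends v₁ ↦ y₁y₂ − 1 and v₂ ↦ y₂. -/

import Mathlib

/-!
Where `y₂ (1 - y₁ y₂)` is inverted, `v₁ = y₁ y₂ - 1` and `v₂ = y₂` are units, and the two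
relations solve for the remaining coordinates: `x₁ v₁ = -(y₂ + 1)` and `x₂ v₁ = -(y₁ + 1)`.
Conversely, substituting these expressions (with `y₁ = (v₁ + 1) v₂⁻¹`) into the relations gives
identities in `ℂ[v₁^{±1}, v₂^{±1}]`, so the two assignments define mutually inverse algebra maps;
each composite fixes the generators, which is a ring identity modulo `u u⁻¹ = 1`.
-/

open MvPolynomial AddMonoidAlgebra

noncomputable section

/-- Relations of the coordinate ring of `S_{1,1}`: variables `x₁ = X 0`, `x₂ = X 1`,
`y₁ = X 2`, `y₂ = X 3`. -/
abbrev srel₀ : Set (MvPolynomial (Fin 4) ℂ) :=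
  {X 2 * X 0 - X 1 + 1, X 3 * X 1 - X 0 + 1}

/-- The coordinate ring of `S_{1,1}`. -/
abbrev SRing₀ : Type := MvPolynomial (Fin 4) ℂ ⧸ Ideal.span srel₀

/-- The Laurent polynomial ring `ℂ[v₁^{±1}, v₂^{±1}]`; `v₁^a·v₂^b = single (a,b) 1`. -/
abbrev Laurent2 : Type := AddMonoidAlgebra ℂ (ℤ × ℤ)

namespace AddMonoidAlgebra

section LaurentTwo

variable {R A : Type*} [CommSemiring R] [CommSemiring A] [Algebra R A]

def zpowPairHom {G : Type*} [CommGroup G] (u v : G) : Multiplicative (ℤ × ℤ) →* G where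
  toFun m := u ^ m.toAdd.1 * v ^ m.toAdd.2
  map_one' := by simp
  map_mul' m n := by
    simp only [toAdd_mul, Prod.fst_add, Prod.snd_add, zpow_add]
    exact mul_mul_mul_comm _ _ _ _

variable (R) in
def laurentLift (u v : Aˣ) : R[ℤ × ℤ] →ₐ[R] A :=
  lift R A (ℤ × ℤ) ((Units.coeHom A).comp (zpowPairHom u v))

@[simp]
theorem laurentLift_single (u v : Aˣ) (a b : ℤ) :
    laurentLift R u v (single (a, b) 1) = ↑(u ^ a * v ^ b) := by
  simp [laurentLift, zpowPairHom]

variable (R) in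
def laurentVar (m : ℤ × ℤ) : R[ℤ × ℤ]ˣ := (of R (ℤ × ℤ)).toHomUnits (Multiplicative.ofAdd m)

theorem single_eq_laurentVar_zpow_mul_zpow (a b : ℤ) :
    (single (a, b) 1 : R[ℤ × ℤ]) = ↑(laurentVar R (1, 0) ^ a * laurentVar R (0, 1) ^ b) := by
  have : Multiplicative.ofAdd (a, b) = Multiplicative.ofAdd ((1 : ℤ), (0 : ℤ)) ^ a *
      Multiplicative.ofAdd ((0 : ℤ), (1 : ℤ)) ^ b := by
    simp [← ofAdd_zsmul, ← ofAdd_add]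
  simp only [laurentVar, ← map_zpow, ← map_mul, ← this]
  simp [of_apply]

theorem map_single_eq_zpow_mul_zpow {B F : Type*} [Monoid B] [FunLike F R[ℤ × ℤ] B]
    [MonoidHomClass F R[ℤ × ℤ] B] (φ : F) (a b : ℤ) :
    φ (single (a, b) 1) = ↑(Units.map (φ : R[ℤ × ℤ] →* B) (laurentVar R (1, 0)) ^ a *
      Units.map (φ : R[ℤ × ℤ] →* B) (laurentVar R (0, 1)) ^ b) := by
  rw [single_eq_laurentVar_zpow_mul_zpow, ← map_zpow, ← map_zpow, ← map_mul, Units.coe_map]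
  rfl

theorem algHom_ext_laurentVar {B : Type*} [Semiring B] [Algebra R B] {f g : R[ℤ × ℤ] →ₐ[R] B}
    (h₁ : f (single (1, 0) 1) = g (single (1, 0) 1))
    (h₂ : f (single (0, 1) 1) = g (single (0, 1) 1)) : f = g := by
  have e₁ : Units.map (f : R[ℤ × ℤ] →* B) (laurentVar R (1, 0)) =
      Units.map (g : R[ℤ × ℤ] →* B) (laurentVar R (1, 0)) := Units.ext h₁
  have e₂ : Units.map (f : R[ℤ × ℤ] →* B) (laurentVar R (0, 1)) =
      Units.map (g : R[ℤ × ℤ] →* B) (laurentVar R (0, 1)) := Units.ext h₂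
  refine algHom_ext (fun ⟨a, b⟩ => ?_) (Subsingleton.elim _ _)
  rw [map_single_eq_zpow_mul_zpow f, map_single_eq_zpow_mul_zpow g, e₁, e₂]

end LaurentTwo

end AddMonoidAlgebra

namespace SRing₀

local notation "v₁" => laurentVar ℂ ((1 : ℤ), (0 : ℤ))

local notation "v₂" => laurentVar ℂ ((0 : ℤ), (1 : ℤ))

abbrev boundary : SRing₀ := Ideal.Quotient.mk (Ideal.span srel₀) (X 3 * (1 - X 2 * X 3))

abbrev Loc : Type := Localization.Away boundary

def toLoc : MvPolynomial (Fin 4) ℂ →ₐ[ℂ] Loc :=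
  (Algebra.algHom ℂ SRing₀ Loc).comp (Ideal.Quotient.mkₐ ℂ (Ideal.span srel₀))

local notation "x₁" => toLoc (X 0)

local notation "x₂" => toLoc (X 1)

local notation "y₁" => toLoc (X 2)

local notation "y₂" => toLoc (X 3)

theorem toLoc_eq_zero {p : MvPolynomial (Fin 4) ℂ} (hp : p ∈ srel₀) : toLoc p = 0 := by
  simp [toLoc, Ideal.Quotient.mkₐ_eq_mk, Ideal.Quotient.eq_zero_iff_mem.mpr (Ideal.subset_span hp)]

theorem isUnit_toLoc_boundary : IsUnit (toLoc (X 3 * (1 - X 2 * X 3))) :=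
  IsLocalization.Away.algebraMap_isUnit boundary

theorem isUnit_y₂ : IsUnit y₂ := by
  refine isUnit_of_mul_isUnit_left (y := toLoc (1 - X 2 * X 3)) ?_
  simpa only [← map_mul] using isUnit_toLoc_boundary

theorem isUnit_y₁y₂_sub_one : IsUnit (toLoc (X 2 * X 3 - 1)) := by
  refine isUnit_of_mul_isUnit_left (y := toLoc (-X 3)) ?_
  rw [← map_mul,
    show (X 2 * X 3 - 1) * -X 3 = (X 3 * (1 - X 2 * X 3) : MvPolynomial (Fin 4) ℂ) by ring]
  exact isUnit_toLoc_boundary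

def u₁ : Locˣ := isUnit_y₁y₂_sub_one.unit

def u₂ : Locˣ := isUnit_y₂.unit

theorem val_u₁ : (u₁ : Loc) = y₁ * y₂ - 1 := by
  simp [u₁]

theorem val_u₂ : (u₂ : Loc) = y₂ := isUnit_y₂.unit_spec

def toLaurentPoly : MvPolynomial (Fin 4) ℂ →ₐ[ℂ] Laurent2 :=
  aeval ![-(single (0, 1) 1 + 1) * single (-1, 0) 1,
    -(single (1, 0) 1 + single (0, 1) 1 + 1) * single (-1, -1) 1,
    (single (1, 0) 1 + 1) * single (0, -1) 1, single (0, 1) 1]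

theorem toLaurentPoly_eq_zero {p : MvPolynomial (Fin 4) ℂ} (hp : p ∈ srel₀) :
    toLaurentPoly p = 0 := by
  rcases hp with rfl | rfl <;>
    simp only [toLaurentPoly, map_add, map_sub, map_mul, map_one, aeval_X, Matrix.cons_val,
      single_eq_laurentVar_zpow_mul_zpow, zpow_neg, zpow_one, zpow_zero, one_mul, mul_one,
      Units.val_mul]
  · linear_combination -(v₂ * ↑v₂⁻¹ : Laurent2) * Units.mul_inv v₁ - Units.mul_inv v₂
  · linear_combination -Units.mul_inv v₁ - (v₁ + v₂ + 1 : Laurent2) * ↑v₁⁻¹ * Units.mul_inv v₂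

def toLaurentQuot : SRing₀ →ₐ[ℂ] Laurent2 :=
  Ideal.Quotient.liftₐ _ toLaurentPoly fun _ hp =>
    (Ideal.span_le (I := RingHom.ker toLaurentPoly)).mpr (fun _ => toLaurentPoly_eq_zero) hp

theorem toLaurentQuot_mk (p : MvPolynomial (Fin 4) ℂ) :
    toLaurentQuot (Ideal.Quotient.mk _ p) = toLaurentPoly p :=
  Ideal.Quotient.lift_mk _ _ _

theorem isUnit_toLaurentQuot_boundary : IsUnit (toLaurentQuot boundary) := by
  have : toLaurentQuot boundary = -↑(v₁ * v₂) := by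
    rw [toLaurentQuot_mk]
    simp only [toLaurentPoly, map_sub, map_mul, map_one, aeval_X, Matrix.cons_val,
      single_eq_laurentVar_zpow_mul_zpow, zpow_neg, zpow_one, zpow_zero, one_mul, mul_one,
      Units.val_mul]
    linear_combination -(v₁ + 1 : Laurent2) * v₂ * Units.mul_inv v₂
  rw [this]
  exact (v₁ * v₂).isUnit.neg

def toLaurent : Loc →ₐ[ℂ] Laurent2 :=
  IsLocalization.Away.liftAlgHom boundary isUnit_toLaurentQuot_boundary

theorem toLaurent_toLoc (p : MvPolynomial (Fin 4) ℂ) : toLaurent (toLoc p) = toLaurentPoly p := by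
  show IsLocalization.Away.lift boundary isUnit_toLaurentQuot_boundary
    (algebraMap SRing₀ Loc (Ideal.Quotient.mk _ p)) = _
  rw [IsLocalization.Away.lift_eq]
  exact toLaurentQuot_mk p

def ofLaurent : Laurent2 →ₐ[ℂ] Loc := laurentLift ℂ u₁ u₂

theorem ofLaurent_single_one_zero : ofLaurent (single (1, 0) 1) = toLoc (X 2 * X 3 - 1) := by
  simp [ofLaurent, val_u₁]

theorem ofLaurent_single_zero_one : ofLaurent (single (0, 1) 1) = y₂ := by
  simp [ofLaurent, val_u₂]

theorem toLaurent_comp_ofLaurent : toLaurent.comp ofLaurent = AlgHom.id ℂ Laurent2 := by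
  refine algHom_ext_laurentVar ?_ ?_ <;>
    simp only [AlgHom.comp_apply, AlgHom.id_apply, ofLaurent_single_one_zero,
      ofLaurent_single_zero_one, toLaurent_toLoc] <;>
    simp [toLaurentPoly, single_eq_laurentVar_zpow_mul_zpow]

theorem ofLaurent_toLaurentPoly_X (i : Fin 4) : ofLaurent (toLaurentPoly (X i)) = toLoc (X i) := by
  have r₁ : y₁ * x₁ - x₂ + 1 = 0 := by
    simpa only [map_add, map_sub, map_mul, map_one] using toLoc_eq_zero (Set.mem_insert _ _)
  have r₂ : y₂ * x₂ - x₁ + 1 = 0 := by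
    simpa only [map_add, map_sub, map_mul, map_one] using
      toLoc_eq_zero (Set.mem_insert_of_mem _ rfl)
  have h₁ : (y₁ * y₂ - 1) * ↑u₁⁻¹ = 1 := by simpa only [val_u₁] using u₁.mul_inv
  have h₂ : y₂ * ↑u₂⁻¹ = 1 := by simpa only [val_u₂] using u₂.mul_inv
  fin_cases i <;>
    simp only [toLaurentPoly, ofLaurent, Fin.zero_eta, Fin.mk_one, Fin.reduceFinMk, aeval_X,
      Matrix.cons_val, map_mul, map_add, map_neg, map_one, laurentLift_single, zpow_neg, zpow_one,
      zpow_zero, one_mul, mul_one, Units.val_mul, val_u₁, val_u₂]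
  · linear_combination -↑u₁⁻¹ * (y₂ * r₁ + r₂) + x₁ * h₁
  · linear_combination -↑u₁⁻¹ * (y₁ * r₂ + r₁) + x₂ * h₁ - (y₁ + 1) * ↑u₁⁻¹ * h₂
  · linear_combination y₁ * h₂

theorem ofLaurent_comp_toLaurent : ofLaurent.comp toLaurent = AlgHom.id ℂ Loc := by
  refine IsLocalization.algHom_ext (Submonoid.powers boundary) (Ideal.Quotient.algHom_ext _ ?_)
  refine MvPolynomial.algHom_ext fun i => ?_
  exact (congrArg ofLaurent (toLaurent_toLoc (X i))).trans (ofLaurent_toLaurentPoly_X i)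

end SRing₀

open SRing₀

theorem stmt_15 :
    ∃ e : Localization.Away
        (Ideal.Quotient.mk (Ideal.span srel₀) (X 3 * (1 - X 2 * X 3))) ≃ₐ[ℂ] Laurent2,
      -- x₁ ↦ −(v₂+1)·v₁⁻¹
      e (algebraMap SRing₀ _ (Ideal.Quotient.mk _ (X 0))) =
        -(single ((0 : ℤ), (1 : ℤ)) 1 + 1) * single ((-1 : ℤ), (0 : ℤ)) 1 ∧
      -- x₂ ↦ −(v₁+v₂+1)·(v₁v₂)⁻¹
      e (algebraMap SRing₀ _ (Ideal.Quotient.mk _ (X 1))) =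
        -(single ((1 : ℤ), (0 : ℤ)) 1 + single ((0 : ℤ), (1 : ℤ)) 1 + 1) *
          single ((-1 : ℤ), (-1 : ℤ)) 1 ∧
      -- y₁ ↦ (v₁+1)·v₂⁻¹
      e (algebraMap SRing₀ _ (Ideal.Quotient.mk _ (X 2))) =
        (single ((1 : ℤ), (0 : ℤ)) 1 + 1) * single ((0 : ℤ), (-1 : ℤ)) 1 ∧
      -- y₂ ↦ v₂
      e (algebraMap SRing₀ _ (Ideal.Quotient.mk _ (X 3))) =
        single ((0 : ℤ), (1 : ℤ)) 1 ∧
      -- inverse: v₁ ↦ y₁y₂ − 1, v₂ ↦ y₂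
      e.symm (single ((1 : ℤ), (0 : ℤ)) 1) =
        algebraMap SRing₀ _ (Ideal.Quotient.mk _ (X 2 * X 3 - 1)) ∧
      e.symm (single ((0 : ℤ), (1 : ℤ)) 1) =
        algebraMap SRing₀ _ (Ideal.Quotient.mk _ (X 3)) := by
  refine ⟨AlgEquiv.ofAlgHom toLaurent ofLaurent toLaurent_comp_ofLaurent ofLaurent_comp_toLaurent,
    ?_, ?_, ?_, ?_, ofLaurent_single_one_zero, ofLaurent_single_zero_one⟩ <;>
  exact (toLaurent_toLoc _).trans (by simp [toLaurentPoly])
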